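/- For every finite list I of items in (0,1] and every r_L ∈ [0,1], let r* := min{|I_L|/(6·size(I_S)), 1} (with r* := 1 if size(I_S) = 0). Then PH3_{r_L}(I) ≤ B(r_L, r*)·OPT(I) + 9/2. -/

import Mathlib

/-- A packing of the list `I` of item sizes into `m` unit-capacity bins:
an assignment of item indices to bins such that each bin's contents sum to at most 1. -/
def IsPacking (I : List ℝ) (m : ℕ) (f : Fin I.length → Fin m) : Prop :=
  ∀ b : Fin m, ∑ i ∈ Finset.univ.filter (fun i => f i = b), I.get i ≤ 1

/-- `OPT I` is the minimum number of unit-capacity bins needed to pack `I`. -/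
noncomputable def OPT (I : List ℝ) : ℕ :=
  sInf {m | ∃ f : Fin I.length → Fin m, IsPacking I m f}

/-- The state maintained by the online algorithm PH3:
* `nXL`: number of XL-bins (each holds one extra large item);
* `nLarge`: number of large items so far, i.e. number of L-bins whose 2/3-sub-bin is used;
* `nM`: number of M-bins; `mOpen`: whether the current M-bin contains exactly one medium item;
* `nS`: number of S-bins; `sLevel`: level of the currently open S-bin;
* `nLS`: number of 1/3-sub-bins of L-bins used by small items so far;
  `lsLevel`: level of the currently open 1/3-sub-bin;
* `sizeSL`: total size of small items packed into L-bins so far;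
* `sizeS`: total size of all small items packed so far. -/
structure PH3State where
  nXL : ℕ
  nLarge : ℕ
  nM : ℕ
  mOpen : Bool
  nS : ℕ
  sLevel : ℝ
  nLS : ℕ
  lsLevel : ℝ
  sizeSL : ℝ
  sizeS : ℝ

/-- One step of PH3 with parameter `rL`: how the state changes upon arrival of item `a`.
Extra large items (`a ≥ 2/3`) get a new XL-bin; large items (`1/2 < a < 2/3`) get (the
2/3-sub-bin of) a new L-bin; medium items (`1/3 < a ≤ 1/2`) are paired in M-bins; a small
item (`a ≤ 1/3`) goes next-fit into the 1/3-sub-bins of L-bins if the total size of small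
items already packed into L-bins is smaller than `rL` times the total size of all small
items packed so far, and otherwise next-fit into S-bins. -/
noncomputable def PH3step (rL : ℝ) (st : PH3State) (a : ℝ) : PH3State :=
  if 2/3 ≤ a then
    { st with nXL := st.nXL + 1 }
  else if 1/2 < a then
    { st with nLarge := st.nLarge + 1 }
  else if 1/3 < a then
    if st.mOpen then { st with mOpen := false }
    else { st with nM := st.nM + 1, mOpen := true }
  else
    if st.sizeSL < rL * st.sizeS then
      -- pack into the 1/3-sub-bin of an L-bin, next-fit
      if st.nLS = 0 ∨ 1/3 < st.lsLevel + a then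
        { st with nLS := st.nLS + 1, lsLevel := a,
                  sizeSL := st.sizeSL + a, sizeS := st.sizeS + a }
      else
        { st with lsLevel := st.lsLevel + a,
                  sizeSL := st.sizeSL + a, sizeS := st.sizeS + a }
    else
      -- pack into an S-bin, next-fit
      if st.nS = 0 ∨ 1 < st.sLevel + a then
        { st with nS := st.nS + 1, sLevel := a, sizeS := st.sizeS + a }
      else
        { st with sLevel := st.sLevel + a, sizeS := st.sizeS + a }

/-- The number of bins used by PH3 with parameter `rL` on the input list `I`: the number of
XL-bins, plus the number of L-bins (an L-bin counts once whether it received a large item,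
small items, or both, so this is the maximum of `nLarge` and `nLS`), plus the number of
M-bins, plus the number of S-bins. -/
noncomputable def PH3 (rL : ℝ) (I : List ℝ) : ℕ :=
  let st := I.foldl (PH3step rL) ⟨0, 0, 0, false, 0, 0, 0, 0, 0, 0⟩
  st.nXL + max st.nLarge st.nLS + st.nM + st.nS


/-- The PH3 bound function `B(r_L, r*)`:
`B(r_L, r*) = 3/2 + min{1/(4r*), 3/(6r*+2)}·(r* − r_L)` if `r* ≥ r_L`, and
`B(r_L, r*) = 3/2 + min{3/(4r*), 9/(6r*+2)}·(r_L − r*)` if `r* < r_L`, where the minima are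
written out piecewise: the first equals `3/(6r*+2)` for `r* ≤ 1/3` and `1/(4r*)` for
`r* ≥ 1/3`, the second equals `9/(6r*+2)` for `r* ≤ 1/3` and `3/(4r*)` for `r* ≥ 1/3`
(in particular, for `r* = 0` both minima are taken as the second expression). -/
noncomputable def Bfun (rL rs : ℝ) : ℝ :=
  if rL ≤ rs then
    3/2 + (if rs ≤ 1/3 then 3/(6*rs + 2) else 1/(4*rs)) * (rs - rL)
  else
    3/2 + (if rs ≤ 1/3 then 9/(6*rs + 2) else 3/(4*rs)) * (rL - rs)

/-!
Three dual feasible weightings of the items bound `OPT` from below: items larger than `1/2`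
need bins of their own, so `X + L ≤ OPT`; a bin holds at most two items larger than `1/3`, and
only one if it holds an item of size at least `2/3`, so `X + L/2 + M/2 ≤ OPT`; and rounding
sizes down gives `2/3 X + L/2 + M/3 + S ≤ OPT` (with `X`, `L`, `M` the numbers of extra large,
large and medium items and `S` the total small size).

On the algorithm side, the small size sent to L-bins stays within `1/3` of `r_L S`, next-fit
fills at most `6 s + 1` sub-bins of capacity `1/3` with small items of total size `s`, and at most
`3/2 s + 1` S-bins. Depending on whether the large or the small items determine the number of
L-bins, `PH3` is therefore at most `X + L + M/2 + 3/2 (1 - r_L) S + 4` or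
`X + M/2 + (3/2 + 9/2 r_L) S + 4`.

With `κ = max (6 r*) (3 r* + 1)` the lower bounds give `κ S ≤ OPT` (as `6 r* S ≤ L`), and `B`
is exactly the function with `(B - 3/2) κ = max (3/2 (r* - r_L)) (9/2 (r_L - r*))`. Both bounds
on `PH3` are then at most `3/2 OPT + (B - 3/2) κ S + 4 ≤ B OPT + 4`.
-/

open Finset

noncomputable def numXL (I : List ℝ) : ℕ := I.countP (fun a => decide (2/3 ≤ a))

noncomputable def numLarge (I : List ℝ) : ℕ := I.countP (fun a => decide (1/2 < a ∧ a < 2/3))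

noncomputable def numMedium (I : List ℝ) : ℕ := I.countP (fun a => decide (1/3 < a ∧ a ≤ 1/2))

noncomputable def sizeSmall (I : List ℝ) : ℝ := (I.filter (fun a => decide (a ≤ 1/3))).sum

theorem sizeSmall_nonneg {I : List ℝ} (hI : ∀ a ∈ I, 0 ≤ a) : 0 ≤ sizeSmall I :=
  List.sum_nonneg fun a ha => hI a (List.mem_filter.1 ha).1

noncomputable def classWeight (cXL cL cM cS a : ℝ) : ℝ :=
  if 2/3 ≤ a then cXL else if 1/2 < a then cL else if 1/3 < a then cM else cS * a

theorem sum_map_classWeight (cXL cL cM cS : ℝ) (I : List ℝ) :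
    (I.map (classWeight cXL cL cM cS)).sum =
      cXL * numXL I + cL * numLarge I + cM * numMedium I + cS * sizeSmall I := by
  induction I with
  | nil => simp [numXL, numLarge, numMedium, sizeSmall]
  | cons a I ih =>
    simp only [numXL, numLarge, numMedium, sizeSmall] at ih
    simp only [List.map_cons, List.sum_cons, ih, numXL, numLarge, numMedium, sizeSmall,
      List.countP_cons, List.filter_cons, decide_eq_true_eq, classWeight]
    split_ifs <;> grind

def IsDualFeasible (w : ℝ → ℝ) : Prop :=
  ∀ {ι : Type} (s : Finset ι) (x : ι → ℝ),
    (∀ i ∈ s, 0 ≤ x i) → ∑ i ∈ s, x i ≤ 1 → ∑ i ∈ s, w (x i) ≤ 1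

theorem exists_isPacking_OPT {I : List ℝ} (hI : ∀ a ∈ I, a ≤ 1) :
    ∃ f : Fin I.length → Fin (OPT I), IsPacking I (OPT I) f := by
  have hne : {m | ∃ f : Fin I.length → Fin m, IsPacking I m f}.Nonempty := by
    refine ⟨I.length, id, fun b => ?_⟩
    simp only [id, Finset.filter_eq', mem_univ, if_true, sum_singleton]
    exact hI _ (List.get_mem I b)
  exact Nat.sInf_mem hne

theorem IsDualFeasible.sum_map_le_OPT {w : ℝ → ℝ} (hw : IsDualFeasible w) {I : List ℝ}
    (hI : ∀ a ∈ I, 0 ≤ a ∧ a ≤ 1) : (I.map w).sum ≤ OPT I := by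
  obtain ⟨f, hf⟩ := exists_isPacking_OPT fun a ha => (hI a ha).2
  calc (I.map w).sum = ∑ b, ∑ i with f i = b, w (I.get i) := by
        rw [sum_fiberwise, ← Fin.sum_univ_fun_getElem]; rfl
    _ ≤ ∑ _b : Fin (OPT I), (1 : ℝ) :=
        sum_le_sum fun b _ => hw _ _ (fun i _ => (hI _ (List.get_mem I i)).1) (hf b)
    _ = OPT I := by simp

section BinContents

variable {ι : Type*} {s : Finset ι} {x : ι → ℝ}

theorem add_le_sum_of_ne [DecidableEq ι] (hx : ∀ i ∈ s, 0 ≤ x i) {i j : ι} (hi : i ∈ s)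
    (hj : j ∈ s) (hij : i ≠ j) : x i + x j ≤ ∑ k ∈ s, x k := by
  rw [← sum_pair hij]
  exact sum_le_sum_of_subset_of_nonneg (by simp [insert_subset_iff, hi, hj]) fun k hk _ => hx k hk

theorem card_filter_half_lt_le_one (hx : ∀ i ∈ s, 0 ≤ x i) (hs : ∑ i ∈ s, x i ≤ 1) :
    #{i ∈ s | 1/2 < x i} ≤ 1 := by
  classical
  refine card_le_one_iff.2 fun {i j} hi hj => ?_
  rw [mem_filter] at hi hj
  by_contra hij
  linarith [add_le_sum_of_ne hx hi.1 hj.1 hij]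

theorem card_filter_third_lt_le_two (hx : ∀ i ∈ s, 0 ≤ x i) (hs : ∑ i ∈ s, x i ≤ 1) :
    #{i ∈ s | 1/3 < x i} ≤ 2 := by
  by_contra! h
  have hne : ({i ∈ s | 1/3 < x i} : Finset ι).Nonempty := card_pos.1 (by omega)
  have hlt := sum_lt_sum_of_nonempty hne (f := fun _ => (1 : ℝ)/3) fun i hi => (mem_filter.1 hi).2
  have hsub : ∑ i ∈ s with 1/3 < x i, x i ≤ ∑ i ∈ s, x i :=
    sum_le_sum_of_subset_of_nonneg (filter_subset _ s) fun i hi _ => hx i hi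
  have h3 : (3 : ℝ) ≤ #{i ∈ s | 1/3 < x i} := by exact_mod_cast h
  rw [sum_const, nsmul_eq_mul] at hlt
  linarith

end BinContents

theorem isDualFeasible_classWeight_size : IsDualFeasible (classWeight (2/3) (1/2) (1/3) 1) := by
  intro ι s x _ hs
  refine le_trans (sum_le_sum fun i _ => ?_) hs
  unfold classWeight
  split_ifs <;> linarith

theorem isDualFeasible_classWeight_half : IsDualFeasible (classWeight 1 1 0 0) := by
  intro ι s x hx hs
  calc ∑ i ∈ s, classWeight 1 1 0 0 (x i) = #{i ∈ s | 1/2 < x i} := by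
        rw [card_filter, Nat.cast_sum]
        refine sum_congr rfl fun i _ => ?_
        unfold classWeight
        split_ifs <;> first | linarith | simp
    _ ≤ 1 := by exact_mod_cast card_filter_half_lt_le_one hx hs

theorem isDualFeasible_classWeight_third : IsDualFeasible (classWeight 1 (1/2) (1/2) 0) := by
  intro ι s x hx hs
  classical
  by_cases hXL : ∃ i ∈ s, 2/3 ≤ x i
  · obtain ⟨i, hi, hxi⟩ := hXL
    have hrest : ∀ j ∈ s.erase i, classWeight 1 (1/2) (1/2) 0 (x j) = 0 := by
      intro j hj
      obtain ⟨hji, hj⟩ := mem_erase.1 hj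
      have := add_le_sum_of_ne hx hi hj (Ne.symm hji)
      unfold classWeight
      split_ifs <;> linarith
    rw [← add_sum_erase s _ hi, sum_eq_zero hrest]
    simp [classWeight, hxi]
  · push Not at hXL
    calc ∑ i ∈ s, classWeight 1 (1/2) (1/2) 0 (x i) = 1/2 * #{i ∈ s | 1/3 < x i} := by
          rw [card_filter, Nat.cast_sum, mul_sum]
          refine sum_congr rfl fun i hi => ?_
          have := hXL i hi
          unfold classWeight
          split_ifs <;> linarith
      _ ≤ 1 := by
          have : (#{i ∈ s | 1/3 < x i} : ℝ) ≤ 2 := by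
            exact_mod_cast card_filter_third_lt_le_two hx hs
          linarith

section LowerBounds

variable {I : List ℝ}

theorem numXL_add_numLarge_le_OPT (hI : ∀ a ∈ I, 0 ≤ a ∧ a ≤ 1) :
    (numXL I + numLarge I : ℝ) ≤ OPT I := by
  simpa [sum_map_classWeight] using isDualFeasible_classWeight_half.sum_map_le_OPT hI

theorem weightedSize_le_OPT (hI : ∀ a ∈ I, 0 ≤ a ∧ a ≤ 1) :
    2/3 * (numXL I : ℝ) + numLarge I / 2 + numMedium I / 3 + sizeSmall I ≤ OPT I := by
  have := isDualFeasible_classWeight_size.sum_map_le_OPT hI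
  rw [sum_map_classWeight] at this
  linarith

theorem numXL_add_half_numLarge_numMedium_le_OPT (hI : ∀ a ∈ I, 0 ≤ a ∧ a ≤ 1) :
    (numXL I : ℝ) + numLarge I / 2 + numMedium I / 2 ≤ OPT I := by
  have := isDualFeasible_classWeight_third.sum_map_le_OPT hI
  rw [sum_map_classWeight] at this
  linarith

end LowerBounds

def PH3State.init : PH3State := ⟨0, 0, 0, false, 0, 0, 0, 0, 0, 0⟩

structure PH3State.Counts (l : List ℝ) (st : PH3State) : Prop where
  nXL_eq : st.nXL = numXL l
  nLarge_eq : st.nLarge = numLarge l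
  two_mul_nM_eq : 2 * st.nM = numMedium l + st.mOpen.toNat
  sizeS_eq : st.sizeS = sizeSmall l

/-- The level terms carry the amortization of next-fit: a closed `1/3`-sub-bin together with the
first item of the next one holds more than `1/3`, and a closed S-bin is more than `2/3` full. -/
structure PH3State.SmallBounds (rL : ℝ) (st : PH3State) : Prop where
  sizeSL_nonneg : 0 ≤ st.sizeSL
  sizeSL_le_sizeS : st.sizeSL ≤ st.sizeS
  sizeSL_ge_rL_mul : rL * st.sizeS - 1/3 ≤ st.sizeSL
  sizeSL_le_rL_mul : st.sizeSL ≤ rL * st.sizeS + 1/3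
  lsLevel_nonneg : 0 ≤ st.lsLevel
  nLS_le : (st.nLS : ℝ) + 3 * st.lsLevel ≤ 6 * st.sizeSL + 1
  sLevel_nonneg : 0 ≤ st.sLevel
  nS_le : (st.nS : ℝ) + 3/2 * st.sLevel ≤ 3/2 * (st.sizeS - st.sizeSL) + 1

namespace PH3State

theorem Counts.step {rL a : ℝ} {l : List ℝ} {st : PH3State} (h : st.Counts l) :
    (PH3step rL st a).Counts (l ++ [a]) := by
  obtain ⟨h1, h2, h3, h4⟩ := h
  simp only [numXL, numLarge, numMedium, sizeSmall] at h1 h2 h3 h4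
  unfold PH3step
  split_ifs <;> constructor <;> simp only [numXL, numLarge, numMedium, sizeSmall,
      List.countP_append, List.filter_append, List.sum_append, List.countP_singleton,
      List.filter_cons, List.filter_nil, decide_eq_true_eq] <;> grind

theorem counts_foldl (rL : ℝ) (I : List ℝ) : (I.foldl (PH3step rL) init).Counts I := by
  induction I using List.reverseRecOn with
  | nil => exact ⟨rfl, rfl, rfl, rfl⟩
  | append_singleton l a ih =>
    rw [List.foldl_append, List.foldl_cons, List.foldl_nil]
    exact ih.step

theorem SmallBounds.step {rL a : ℝ} {st : PH3State} (hrL : rL ∈ Set.Icc (0 : ℝ) 1)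
    (ha : 0 < a) (h : st.SmallBounds rL) : (PH3step rL st a).SmallBounds rL := by
  obtain ⟨hrL0, hrL1⟩ := hrL
  obtain ⟨h1, h2, h3, h4, h5, h6, h7, h8⟩ := h
  have hra : 0 ≤ rL * a := mul_nonneg hrL0 ha.le
  have hra' : rL * a ≤ a := mul_le_of_le_one_left ha.le hrL1
  unfold PH3step
  split_ifs with hXL hL hM hopen hLS hnew hnewS
  all_goals try exact ⟨h1, h2, h3, h4, h5, h6, h7, h8⟩
  all_goals push Not at *
  · have : (st.nLS : ℝ) + 1 + 3 * a ≤ 6 * (st.sizeSL + a) + 1 := by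
      rcases hnew with h0 | h0
      · rw [h0]; push_cast; linarith
      · linarith
    constructor <;> dsimp only <;> push_cast <;> linarith
  · constructor <;> dsimp only <;> linarith
  · have : (st.nS : ℝ) + 1 + 3/2 * a ≤ 3/2 * (st.sizeS + a - st.sizeSL) + 1 := by
      rcases hnewS with h0 | h0
      · rw [h0]; push_cast; linarith
      · linarith
    constructor <;> dsimp only <;> push_cast <;> linarith
  · constructor <;> dsimp only <;> linarith

theorem SmallBounds.foldl {rL : ℝ} (hrL : rL ∈ Set.Icc (0 : ℝ) 1) {I : List ℝ}
    (hI : ∀ a ∈ I, 0 < a) {st : PH3State} (h : st.SmallBounds rL) :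
    (I.foldl (PH3step rL) st).SmallBounds rL := by
  induction I generalizing st with
  | nil => exact h
  | cons a I ih =>
    exact ih (fun b hb => hI b (List.mem_cons_of_mem a hb)) (h.step hrL (hI a List.mem_cons_self))

theorem smallBounds_init (rL : ℝ) : init.SmallBounds rL := by
  constructor <;> norm_num [init]

end PH3State

theorem PH3_le_max_add {rL : ℝ} (hrL : rL ∈ Set.Icc (0 : ℝ) 1) {I : List ℝ}
    (hI : ∀ a ∈ I, 0 < a) :
    (PH3 rL I : ℝ) ≤ max (numXL I + numLarge I + numMedium I / 2 + 3/2 * (1 - rL) * sizeSmall I)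
      (numXL I + numMedium I / 2 + (3/2 + 9/2 * rL) * sizeSmall I) + 4 := by
  obtain ⟨hXL, hL, hM, hS⟩ := PH3State.counts_foldl rL I
  obtain ⟨-, -, hSL₁, hSL₂, hls, hLS, hs, hnS⟩ := (PH3State.smallBounds_init rL).foldl hrL hI
  set st := I.foldl (PH3step rL) PH3State.init
  have hnM : 2 * (st.nM : ℝ) ≤ numMedium I + 1 := by
    have : 2 * st.nM ≤ numMedium I + 1 := by have := Bool.toNat_le st.mOpen; omega
    exact_mod_cast this
  have hPH3 : (PH3 rL I : ℝ) = st.nXL + max (st.nLarge : ℝ) st.nLS + st.nM + st.nS := by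
    simp [PH3, st, PH3State.init]
  rw [hPH3, hXL, hL, ← hS]
  rcases le_total (numLarge I : ℝ) st.nLS with h | h
  · rw [max_eq_right h]
    have := le_max_right (numXL I + numLarge I + numMedium I / 2 + 3/2 * (1 - rL) * st.sizeS)
      (numXL I + numMedium I / 2 + (3/2 + 9/2 * rL) * st.sizeS)
    linarith
  · rw [max_eq_left h]
    have := le_max_left (numXL I + numLarge I + numMedium I / 2 + 3/2 * (1 - rL) * st.sizeS)
      (numXL I + numMedium I / 2 + (3/2 + 9/2 * rL) * st.sizeS)
    linarith

theorem rstar_spec {L S ρ : ℝ} (hL : 0 ≤ L) (hS : 0 ≤ S)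
    (hρ : ρ = if S = 0 then 1 else min (L / (6 * S)) 1) :
    0 ≤ ρ ∧ 6 * ρ * S ≤ L ∧ (ρ = 1 ∨ 6 * ρ * S = L) := by
  split_ifs at hρ with hS0
  · subst hρ hS0; simpa using hL
  have hS' : 0 < 6 * S := by positivity
  rcases le_total (L / (6 * S)) 1 with h | h
  · rw [min_eq_left h] at hρ
    subst hρ
    have : L / (6 * S) * (6 * S) = L := div_mul_cancel₀ L hS'.ne'
    exact ⟨by positivity, by linarith, Or.inr (by linarith)⟩
  · rw [min_eq_right h] at hρ
    subst hρ
    exact ⟨zero_le_one, by linarith [(le_div_iff₀ hS').1 h], Or.inl rfl⟩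

theorem Bfun_sub_mul_eq {rL ρ : ℝ} (hρ : 0 ≤ ρ) :
    (Bfun rL ρ - 3/2) * max (6 * ρ) (3 * ρ + 1) = max (3/2 * (ρ - rL)) (9/2 * (rL - ρ)) := by
  unfold Bfun
  rcases le_or_gt ρ (1/3) with h13 | h13
  · rw [max_eq_right (by linarith : 6 * ρ ≤ 3 * ρ + 1)]
    split_ifs with hr
    · rw [max_eq_left (by linarith)]; field_simp; ring
    · rw [max_eq_right (by linarith)]; field_simp; ring
  · rw [max_eq_left (by linarith : 3 * ρ + 1 ≤ 6 * ρ)]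
    have : ρ ≠ 0 := by positivity
    simp only [not_le.2 h13, if_false]
    split_ifs with hr
    · rw [max_eq_left (by linarith)]; field_simp; ring
    · rw [max_eq_right (by linarith)]; field_simp; ring

theorem max_le_Bfun_mul {rL ρ X L M S O : ℝ} (hρ : 0 ≤ ρ) (hX : 0 ≤ X) (hM : 0 ≤ M)
    (hS : 0 ≤ S) (hρL : 6 * ρ * S ≤ L) (hρ1 : ρ = 1 ∨ 6 * ρ * S = L)
    (hO₁ : X + L ≤ O) (hO₂ : 2/3 * X + L/2 + M/3 + S ≤ O) (hO₃ : X + L/2 + M/2 ≤ O) :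
    max (X + L + M/2 + 3/2 * (1 - rL) * S) (X + M/2 + (3/2 + 9/2 * rL) * S) ≤
      Bfun rL ρ * O := by
  have hκS : max (6 * ρ) (3 * ρ + 1) * S ≤ O := by
    rcases max_choice (6 * ρ) (3 * ρ + 1) with h | h <;> rw [h] <;> linarith
  have hBκ := Bfun_sub_mul_eq (rL := rL) hρ
  have hB : 0 ≤ Bfun rL ρ - 3/2 := by
    have hκ : (0 : ℝ) < max (6 * ρ) (3 * ρ + 1) := lt_max_of_lt_right (by linarith)
    refine nonneg_of_mul_nonneg_left ?_ hκ
    rw [hBκ]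
    rcases le_total rL ρ with h | h
    · exact le_max_of_le_left (by linarith)
    · exact le_max_of_le_right (by linarith)
  calc _ ≤ 3/2 * O + (Bfun rL ρ - 3/2) * max (6 * ρ) (3 * ρ + 1) * S := by
        rw [hBκ]
        apply max_le
        · have := mul_le_mul_of_nonneg_right (le_max_left (3/2 * (ρ - rL)) (9/2 * (rL - ρ))) hS
          rcases hρ1 with rfl | hL <;> linarith
        · have := mul_le_mul_of_nonneg_right (le_max_right (3/2 * (ρ - rL)) (9/2 * (rL - ρ))) hS
          linarith
    _ ≤ 3/2 * O + (Bfun rL ρ - 3/2) * O := by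
        rw [mul_assoc]; gcongr
    _ = Bfun rL ρ * O := by ring

/-- Competitive-ratio bound for PH3 (Theorem 3 of the paper): for every input list `I` of
items in `(0,1]` and parameter `r_L ∈ [0,1]`, with
`r* = min(|I_L| / (6·size(I_S)), 1)` (taken to be `1` when `size(I_S) = 0`),
PH3 uses at most `B(r_L, r*)·OPT(I) + 9/2` bins. -/
theorem PH3_competitive (I : List ℝ) (hI : ∀ a ∈ I, 0 < a ∧ a ≤ 1)
    (rL : ℝ) (hrL : rL ∈ Set.Icc (0 : ℝ) 1) :
    ∀ rstar : ℝ,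
      rstar = (if (I.filter (fun a => decide (a ≤ 1/3))).sum = 0 then 1
               else min ((I.countP (fun a => decide (1/2 < a ∧ a < 2/3)) : ℝ) /
                          (6 * (I.filter (fun a => decide (a ≤ 1/3))).sum)) 1) →
      (PH3 rL I : ℝ) ≤ Bfun rL rstar * (OPT I : ℝ) + 9/2 := by
  intro ρ hρ
  have hI₀ : ∀ a ∈ I, 0 ≤ a ∧ a ≤ 1 := fun a ha => ⟨(hI a ha).1.le, (hI a ha).2⟩
  have hS : 0 ≤ sizeSmall I := sizeSmall_nonneg fun a ha => (hI₀ a ha).1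
  obtain ⟨hρ₀, hρL, hρ₁⟩ := rstar_spec (Nat.cast_nonneg (numLarge I)) hS hρ
  calc (PH3 rL I : ℝ)
      ≤ max (numXL I + numLarge I + numMedium I / 2 + 3/2 * (1 - rL) * sizeSmall I)
          (numXL I + numMedium I / 2 + (3/2 + 9/2 * rL) * sizeSmall I) + 4 :=
        PH3_le_max_add hrL fun a ha => (hI a ha).1
    _ ≤ Bfun rL ρ * OPT I + 4 := by
        gcongr
        exact max_le_Bfun_mul hρ₀ (Nat.cast_nonneg _) (Nat.cast_nonneg _) hS hρL hρ₁
          (numXL_add_numLarge_le_OPT hI₀) (weightedSize_le_OPT hI₀)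
          (numXL_add_half_numLarge_numMedium_le_OPT hI₀)
    _ ≤ Bfun rL ρ * OPT I + 9/2 := by linarith
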